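/- arXiv:2007.15040 — 4 statements merged into one kernel-verified Lean document; each statement's English description precedes it below -/
import Mathlib

section
/- In the gradient computational graph, the weight of a nonlinear arc (j, ī) is c^{ī}_j = Σ_{k : i≺k and j≺k} v̄_k ∂²v_k/(∂v_j ∂v_i), and consequently (by symmetry of second derivatives of C² functions) c^{ī}_j = c^{j̄}_i for all j ≠ i. -/
/-!
Symmetry of second derivatives (Schwarz) makes `H2 (φ k) w j i` symmetric in `i, j`.
If `φ k` does not depend on `v_j`, its `j`-th partial vanishes identically, so by symmetry so
does every mixed partial involving `j`; hence only common successors of `i` and `j` contribute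
to `c i j`, and the two sums defining `c i j` and `c j i` agree term by term.
-/

/-- Second partial derivative ∂²g/∂x_j∂x_k. -/
noncomputable def H2 {n : ℕ} (g : (Fin n → ℝ) → ℝ) (x : Fin n → ℝ) (j k : Fin n) : ℝ :=
  fderiv ℝ (fun y => fderiv ℝ g y (Pi.single k 1)) x (Pi.single j 1)

section SecondDerivative

variable {𝕜 E F : Type*} [RCLike 𝕜] [NormedAddCommGroup E] [NormedSpace 𝕜 E]
  [NormedAddCommGroup F] [NormedSpace 𝕜 F]

theorem fderiv_fderiv_apply_comm {g : E → F} {x : E} (hg : ContDiffAt 𝕜 2 g x) (u v : E) :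
    fderiv 𝕜 (fun y => fderiv 𝕜 g y v) x u = fderiv 𝕜 (fun y => fderiv 𝕜 g y u) x v := by
  have hdiff : DifferentiableAt 𝕜 (fderiv 𝕜 g) x :=
    (hg.fderiv_right (m := 1) le_rfl).differentiableAt one_ne_zero
  have hsymm : IsSymmSndFDerivAt 𝕜 g x :=
    hg.isSymmSndFDerivAt (by simp only [minSmoothness_of_isRCLikeNormedField]; norm_cast)
  have hpartial (v : E) :
      fderiv 𝕜 (fun y => fderiv 𝕜 g y v) x = (fderiv 𝕜 (fderiv 𝕜 g) x).flip v := by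
    simpa using fderiv_clm_apply hdiff (differentiableAt_const v)
  rw [hpartial, hpartial]
  exact hsymm u v

end SecondDerivative

theorem H2_comm {n : ℕ} {g : (Fin n → ℝ) → ℝ} {x : Fin n → ℝ} (hg : ContDiffAt ℝ 2 g x)
    (j k : Fin n) : H2 g x j k = H2 g x k j :=
  fderiv_fderiv_apply_comm hg _ _

theorem H2_eq_zero_of_fderiv_apply_single_eq_zero {n : ℕ} {g : (Fin n → ℝ) → ℝ}
    (x : Fin n → ℝ) (j : Fin n) {k : Fin n} (h : ∀ y, fderiv ℝ g y (Pi.single k 1) = 0) :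
    H2 g x j k = 0 := by
  simp [H2, h]

/-- the weight of the nonlinear arc (j, ī),
c^{ī}_j = Σ_{k : i≺k} v̄_k ∂²φ_k/∂v_j∂v_i, restricts to the common successors of
i and j, and is symmetric: c^{ī}_j = c^{j̄}_i for j ≠ i.  Here `A j k` means
j ≺ k (φ_k depends on v_j), and partials of φ_k w.r.t. non-predecessors vanish. -/
theorem nonlinear_arc_weight_symmetry (N : ℕ)
    (A : Fin N → Fin N → Prop) [DecidableRel A]
    (φ : Fin N → (Fin N → ℝ) → ℝ)
    (hC : ∀ k, ContDiff ℝ 2 (φ k))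
    (hdep : ∀ k j, ¬ A j k → ∀ w, fderiv ℝ (φ k) w (Pi.single j 1) = 0)
    (vbar : Fin N → ℝ) (w : Fin N → ℝ)
    (c : Fin N → Fin N → ℝ)
    (hc : ∀ i j, c i j = ∑ k ∈ Finset.univ.filter (fun k => A i k),
        vbar k * H2 (φ k) w j i) :
    (∀ i j, c i j = ∑ k ∈ Finset.univ.filter (fun k => A i k ∧ A j k),
        vbar k * H2 (φ k) w j i)
    ∧ ∀ i j, i ≠ j → c i j = c j i := by
  have hcomm : ∀ k i j, H2 (φ k) w i j = H2 (φ k) w j i := fun k =>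
    H2_comm (hC k).contDiffAt
  have common : ∀ i j, c i j = ∑ k ∈ Finset.univ.filter (fun k => A i k ∧ A j k),
      vbar k * H2 (φ k) w j i := by
    intro i j
    rw [hc i j, ← Finset.filter_filter]
    refine (Finset.sum_filter_of_ne fun k _ hk => ?_).symm
    by_contra hjk
    apply hk
    rw [hcomm, H2_eq_zero_of_fderiv_apply_single_eq_zero w i (hdep k j hjk), mul_zero]
  refine ⟨common, fun i j _ => ?_⟩
  rw [common i j, common j i]
  simp only [and_comm, hcomm _ i j]
end

section
/- Let W be an (n+ℓ)×(n+ℓ) symmetric matrix whose only nonzero entries lie in rows/columns with indices ≤ i, and let Φ_i' be the state-transformation Jacobian (identity except row i equals (c^i)^T with support in predecessors of i and zero from column i onward). Then ((Φ_i')^T W Φ_i')_{jk} = w_{jk} + (∂φ_i/∂v_k)(∂φ_i/∂v_j) w_{ii} + (∂φ_i/∂v_k) w_{ji} + (∂φ_i/∂v_j) w_{ik} for j, k < i, and ((Φ_i')^T W Φ_i')_{jk} = 0 whenever j ≥ i or k ≥ i. -/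
/-! Write `Φ = 1 + eᵢ uᵀ` with `u = c - eᵢ`. Expanding the rank-one update gives
`(ΦᵀWΦ)_{jk} = w_{jk} + u_j w_{ik} + u_k w_{ji} + u_j u_k w_{ii}` for all `j, k`. Below `i`
we have `u = c`; at `i` we have `u_i = -1` (as `c_i = 0`), which makes row and column `i`
cancel; above `i` both `u` and the relevant entries of `W` vanish. -/

open Matrix

section

variable {n R : Type*} [DecidableEq n] [CommRing R]

theorem Matrix.updateRow_one_eq_one_add_vecMulVec (i : n) (c : n → R) :
    (1 : Matrix n n R).updateRow i c = 1 + vecMulVec (Pi.single i 1) (c - Pi.single i 1) := by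
  ext a b
  rcases eq_or_ne a i with rfl | ha
  · simp [vecMulVec_apply, one_apply, Pi.single_apply, eq_comm (a := b)]
  · simp [ha, updateRow_apply, vecMulVec_apply]

variable [Fintype n]

theorem Matrix.transpose_mul_mul_one_add_single_vecMulVec_apply (W : Matrix n n R) (i : n)
    (u : n → R) (j k : n) :
    ((1 + vecMulVec (Pi.single i 1) u : Matrix n n R)ᵀ * W * (1 + vecMulVec (Pi.single i 1) u))
      j k = W j k + u j * W i k + u k * W j i + u j * u k * W i i := by
  simp only [transpose_add, transpose_one, transpose_vecMulVec, add_mul, mul_add, one_mul,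
    mul_apply, add_apply, one_apply, vecMulVec_apply, Pi.single_apply, mul_ite, ite_mul, mul_one,
    mul_zero, zero_mul, Finset.sum_add_distrib, Finset.sum_ite_eq', Finset.mem_univ, ↓reduceIte]
  ring

end

theorem pushing_step_componentwise_general (N : ℕ) (i : Fin N)
    (pred : Fin N → Prop) (hlt : ∀ j, pred j → j < i)
    (c : Fin N → ℝ) (hc : ∀ b, ¬ pred b → c b = 0)
    (W : Matrix (Fin N) (Fin N) ℝ)
    (hW : ∀ a b : Fin N, (i < a ∨ i < b) → W a b = 0)
    (J : Matrix (Fin N) (Fin N) ℝ)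
    (hJ : ∀ a b, J a b = if a = i then c b else if a = b then 1 else 0) :
    (∀ j k : Fin N, j < i → k < i →
        (Jᵀ * W * J) j k = W j k + c k * c j * W i i + c k * W j i + c j * W i k)
    ∧ (∀ j k : Fin N, (i ≤ j ∨ i ≤ k) → (Jᵀ * W * J) j k = 0) := by
  have hc_ge : ∀ b, i ≤ b → c b = 0 := fun b hb => hc b fun hb' => (hlt b hb').not_ge hb
  set u := c - Pi.single i 1 with hu
  have hu_lt : ∀ j, j < i → u j = c j := fun j hj => by simp [hu, hj.ne]
  have hu_self : u i = -1 := by simp [hu, hc_ge i le_rfl]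
  have hu_gt : ∀ j, i < j → u j = 0 := fun j hj => by simp [hu, hj.ne', hc_ge j hj.le]
  have hJu : J = 1 + vecMulVec (Pi.single i 1) u := by
    rw [← updateRow_one_eq_one_add_vecMulVec]
    ext a b
    simp [hJ, updateRow_apply, one_apply]
  simp only [hJu, transpose_mul_mul_one_add_single_vecMulVec_apply]
  refine ⟨fun j k hj hk => ?_, fun j k hjk => ?_⟩
  · rw [hu_lt j hj, hu_lt k hk]
    ring
  rcases hjk with hj | hk
  · rcases hj.eq_or_lt with rfl | hj
    · rw [hu_self]; ring
    · simp [hu_gt j hj, hW j _ (Or.inl hj)]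
  · rcases hk.eq_or_lt with rfl | hk
    · rw [hu_self]; ring
    · simp [hu_gt k hk, hW _ k (Or.inr hk)]

/-- componentwise form of the pushing step.  If W is symmetric
with nonzero entries only in rows/columns of index ≤ i, and J = Φᵢ' is the
identity except that row i equals the gradient cᵀ of φᵢ (supported on the
predecessors of i, all of index < i), then (JᵀWJ)_{jk} =
w_{jk} + c_k c_j w_{ii} + c_k w_{ji} + c_j w_{ik} for j,k < i, and
(JᵀWJ)_{jk} = 0 whenever j ≥ i or k ≥ i. -/
theorem pushing_step_componentwise (N : ℕ) (i : Fin N)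
    (pred : Fin N → Prop) (hlt : ∀ j, pred j → j < i)
    (c : Fin N → ℝ) (hc : ∀ b, ¬ pred b → c b = 0)
    (W : Matrix (Fin N) (Fin N) ℝ) (hWsym : W.IsSymm)
    (hW : ∀ a b : Fin N, (i < a ∨ i < b) → W a b = 0)
    (J : Matrix (Fin N) (Fin N) ℝ)
    (hJ : ∀ a b, J a b = if a = i then c b else if a = b then 1 else 0) :
    (∀ j k : Fin N, j < i → k < i →
        (Jᵀ * W * J) j k = W j k + c k * c j * W i i + c k * W j i + c j * W i k)
    ∧ (∀ j k : Fin N, (i ≤ j ∨ i ≤ k) → (Jᵀ * W * J) j k = 0) :=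
  pushing_step_componentwise_general N i pred hlt c hc W hW J hJ
end

section
/- In the block reverse Hessian algorithm (edge_pushing block form), which initializes W = 0, v̄ = e_ℓ, and for i = ℓ down to 1 performs W ← (Φ_i')^T W Φ_i', then W ← W + (v̄^T Φ_i''), then v̄^T ← v̄^T Φ_i', the following invariant holds: at the end of the iteration sweeping node i, W = Σ_{k=i}^ℓ (Φ_i'^T ⋯ Φ_{k-1}'^T)((v̄^k)^T Φ_k'')(Φ_{k-1}' ⋯ Φ_i'), where (v̄^k)^T = e_ℓ^T Φ_ℓ' ⋯ Φ_{k+1}'. In particular, at termination f''(x) = P W P^T. -/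
open Matrix

/-!
Edge pushing evaluates `Σₖ (Φₖ₋₁'⋯Φᵢ')ᵀ ((v̄ᵏ)ᵀΦₖ'') (Φₖ₋₁'⋯Φᵢ')` by Horner's rule: one backward
step conjugates the partial sum by `Φᵢ'` and adds the central term of node `i`, whence the
invariant by reverse induction on `i`. That the final sum (`i = 1`) is the Hessian comes from the
second-order chain rule `(wᵀ(G ∘ F))'' = F'ᵀ (wᵀG'') F' + (wᵀG') F''`: applied layer by layer
it splits off one central term and hands the adjoint weight `v̄ᵏ` down to `v̄ᵏ⁻¹ = (v̄ᵏ)ᵀΦₖ'`, until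
only the linear input map `y ↦ Pᵀy` remains, which has no Hessian. Since the state Jacobians are
`Φₖ₋₁'⋯Φ₁'Pᵀ`, this gives `f'' = P W Pᵀ`.
-/

/-- First partial derivative ∂g/∂x_j. -/
noncomputable def pd {n : ℕ} (g : (Fin n → ℝ) → ℝ) (x : Fin n → ℝ) (j : Fin n) : ℝ :=
  fderiv ℝ g x (Pi.single j 1)

noncomputable def jacobianMatrix {m p : ℕ} (F : (Fin m → ℝ) → Fin p → ℝ) (x : Fin m → ℝ) :
    Matrix (Fin p) (Fin m) ℝ :=
  Matrix.of fun a j => pd (fun y => F y a) x j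

noncomputable def hessianMatrix {m : ℕ} (g : (Fin m → ℝ) → ℝ) (x : Fin m → ℝ) :
    Matrix (Fin m) (Fin m) ℝ :=
  Matrix.of (H2 g x)

section Calculus

variable {m p q : ℕ}

lemma pd_sum {ι : Type*} (s : Finset ι) {u : ι → (Fin m → ℝ) → ℝ} {x : Fin m → ℝ}
    (hu : ∀ i ∈ s, DifferentiableAt ℝ (u i) x) (j : Fin m) :
    pd (fun y => ∑ i ∈ s, u i y) x j = ∑ i ∈ s, pd (u i) x j := by
  simp [pd, fderiv_fun_sum hu]

lemma pd_mul {u v : (Fin m → ℝ) → ℝ} {x : Fin m → ℝ} (hu : DifferentiableAt ℝ u x)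
    (hv : DifferentiableAt ℝ v x) (j : Fin m) :
    pd (fun y => u y * v y) x j = pd u x j * v x + u x * pd v x j := by
  simp only [pd, fderiv_fun_mul hu hv, _root_.add_apply, _root_.smul_apply, smul_eq_mul]
  ring

lemma differentiable_pd {u : (Fin m → ℝ) → ℝ} (hu : ContDiff ℝ 2 u) (c : Fin m) :
    Differentiable ℝ (fun z => pd u z c) :=
  ((hu.fderiv_right (m := 1) (by norm_num)).clm_apply contDiff_const).differentiable one_ne_zero

lemma jacobianMatrix_eq_toMatrix' {F : (Fin m → ℝ) → Fin p → ℝ} {x : Fin m → ℝ}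
    (hF : DifferentiableAt ℝ F x) :
    jacobianMatrix F x = LinearMap.toMatrix' (fderiv ℝ F x : (Fin m → ℝ) →ₗ[ℝ] Fin p → ℝ) := by
  ext a j
  simp [jacobianMatrix, pd, fderiv_apply hF]

lemma jacobianMatrix_comp {F : (Fin m → ℝ) → Fin p → ℝ} {G : (Fin p → ℝ) → Fin q → ℝ}
    {x : Fin m → ℝ} (hG : DifferentiableAt ℝ G (F x)) (hF : DifferentiableAt ℝ F x) :
    jacobianMatrix (fun y => G (F y)) x = jacobianMatrix G (F x) * jacobianMatrix F x := by
  have hGF : DifferentiableAt ℝ (fun y => G (F y)) x := hG.comp x hF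
  rw [jacobianMatrix_eq_toMatrix' hGF, jacobianMatrix_eq_toMatrix' hG,
    jacobianMatrix_eq_toMatrix' hF, ← LinearMap.toMatrix'_comp, fderiv_fun_comp x hG hF]
  rfl

lemma pd_comp {F : (Fin m → ℝ) → Fin p → ℝ} {g : (Fin p → ℝ) → ℝ} {x : Fin m → ℝ}
    (hg : DifferentiableAt ℝ g (F x)) (hF : DifferentiableAt ℝ F x) (j : Fin m) :
    pd (fun y => g (F y)) x j = ∑ b, pd g (F x) b * jacobianMatrix F x b j := by
  have hG : DifferentiableAt ℝ (fun z (_ : Fin 1) => g z) (F x) :=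
    differentiableAt_pi.mpr fun _ => hg
  exact congrFun (congrFun (jacobianMatrix_comp hG hF) 0) j

lemma hessianMatrix_comp {F : (Fin m → ℝ) → Fin p → ℝ} {g : (Fin p → ℝ) → ℝ}
    (hg : ContDiff ℝ 2 g) (hF : ContDiff ℝ 2 F) (x : Fin m → ℝ) :
    hessianMatrix (fun y => g (F y)) x
      = (jacobianMatrix F x)ᵀ * hessianMatrix g (F x) * jacobianMatrix F x
        + ∑ c, pd g (F x) c • hessianMatrix (fun y => F y c) x := by
  have hFd : Differentiable ℝ F := hF.differentiable two_ne_zero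
  have hFc : ∀ c, ContDiff ℝ 2 (fun y => F y c) := contDiff_pi.mp hF
  have hgF : ∀ c, Differentiable ℝ (fun y => pd g (F y) c) :=
    fun c => (differentiable_pd hg c).comp hFd
  ext j k
  have hgrad : (fun y => pd (fun z => g (F z)) y k)
      = fun y => ∑ c, pd g (F y) c * pd (fun z => F z c) y k :=
    funext fun y => pd_comp (hg.differentiable two_ne_zero _) (hFd y) k
  calc H2 (fun y => g (F y)) x j k
      = ∑ c, (pd (fun y => pd g (F y) c) x j * pd (fun z => F z c) x k
          + pd g (F x) c * H2 (fun z => F z c) x j k) := by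
        change pd (fun y => pd (fun z => g (F z)) y k) x j = _
        rw [hgrad, pd_sum (u := fun c y => pd g (F y) c * pd (fun z => F z c) y k) _
          fun c _ => (hgF c x).mul (differentiable_pd (hFc c) k x)]
        exact Finset.sum_congr rfl fun c _ =>
          pd_mul (hgF c x) (differentiable_pd (hFc c) k x) j
    _ = ∑ c, ((∑ b, H2 g (F x) b c * jacobianMatrix F x b j) * jacobianMatrix F x c k
          + pd g (F x) c * H2 (fun z => F z c) x j k) := by
        refine Finset.sum_congr rfl fun c _ => ?_
        rw [pd_comp (differentiable_pd hg c _) (hFd x)]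
        rfl
    _ = _ := by
        simp only [Matrix.add_apply, Matrix.sum_apply, Matrix.smul_apply, mul_apply,
          transpose_apply, hessianMatrix, of_apply, Finset.sum_add_distrib, Finset.sum_mul,
          smul_eq_mul]
        congr 1
        refine Finset.sum_congr rfl fun c _ => Finset.sum_congr rfl fun b _ => ?_
        ring

lemma sum_smul_hessianMatrix_comp {F : (Fin m → ℝ) → Fin p → ℝ} {G : (Fin p → ℝ) → Fin q → ℝ}
    (hG : ContDiff ℝ 2 G) (hF : ContDiff ℝ 2 F) (w : Fin q → ℝ) (x : Fin m → ℝ) :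
    ∑ a, w a • hessianMatrix (fun y => G (F y) a) x
      = (jacobianMatrix F x)ᵀ * (∑ a, w a • hessianMatrix (fun z => G z a) (F x))
          * jacobianMatrix F x
        + ∑ c, (w ᵥ* jacobianMatrix G (F x)) c • hessianMatrix (fun y => F y c) x := by
  simp only [fun a => hessianMatrix_comp (contDiff_pi.mp hG a) hF x, smul_add,
    Finset.sum_add_distrib, Matrix.mul_sum, Matrix.sum_mul, Matrix.mul_smul, Matrix.smul_mul,
    Finset.smul_sum, smul_smul, vecMul, dotProduct, Finset.sum_smul]
  rw [Finset.sum_comm (s := Finset.univ (α := Fin q))]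
  rfl

lemma jacobianMatrix_mulVec (A : Matrix (Fin p) (Fin m) ℝ) (x : Fin m → ℝ) :
    jacobianMatrix (fun y => A *ᵥ y) x = A := by
  let L := LinearMap.toContinuousLinearMap (Matrix.toLin' A)
  change jacobianMatrix L x = A
  rw [jacobianMatrix_eq_toMatrix' L.differentiableAt, L.fderiv]
  exact LinearMap.toMatrix'_toLin' A

lemma hessianMatrix_mulVec_apply (A : Matrix (Fin p) (Fin m) ℝ) (c : Fin p) (x : Fin m → ℝ) :
    hessianMatrix (fun y => (A *ᵥ y) c) x = 0 := by
  ext j k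
  have hconst : (fun y => pd (fun z => (A *ᵥ z) c) y k) = fun _ => A c k :=
    funext fun y => congrFun (congrFun (jacobianMatrix_mulVec A y) c) k
  change pd (fun y => pd (fun z => (A *ᵥ z) c) y k) x j = 0
  rw [hconst, pd, fderiv_const_apply]
  rfl

end Calculus

section Iterate

variable {m p : ℕ} {Φ : ℕ → (Fin p → ℝ) → Fin p → ℝ} {Z : ℕ → (Fin m → ℝ) → Fin p → ℝ}

lemma contDiff_of_comp_succ {k : WithTop ℕ∞} (hΦ : ∀ t, ContDiff ℝ k (Φ t))
    (hZ0 : ContDiff ℝ k (Z 0)) (hZs : ∀ t y, Z (t + 1) y = Φ t (Z t y)) (t : ℕ) :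
    ContDiff ℝ k (Z t) := by
  induction t with
  | zero => exact hZ0
  | succ t ih =>
    rw [show Z (t + 1) = fun y => Φ t (Z t y) from funext (hZs t)]
    exact (hΦ t).comp ih

lemma jacobianMatrix_iterate (hΦ : ∀ t, Differentiable ℝ (Φ t))
    (hZ : ∀ t, Differentiable ℝ (Z t)) (hZs : ∀ t y, Z (t + 1) y = Φ t (Z t y))
    (x : Fin m → ℝ) {Rel : ℕ → Matrix (Fin p) (Fin p) ℝ} (hRel0 : Rel 0 = 1)
    (hRelS : ∀ t, Rel (t + 1) = jacobianMatrix (Φ t) (Z t x) * Rel t) (t : ℕ) :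
    jacobianMatrix (Z t) x = Rel t * jacobianMatrix (Z 0) x := by
  induction t with
  | zero => rw [hRel0, Matrix.one_mul]
  | succ t ih =>
    rw [show Z (t + 1) = fun y => Φ t (Z t y) from funext (hZs t),
      jacobianMatrix_comp (hΦ t _) (hZ t x), ih, hRelS, Matrix.mul_assoc]

lemma sum_smul_hessianMatrix_iterate (hΦ : ∀ t, ContDiff ℝ 2 (Φ t))
    (hZ : ∀ t, ContDiff ℝ 2 (Z t)) (hZs : ∀ t y, Z (t + 1) y = Φ t (Z t y)) {x : Fin m → ℝ}
    (hZ0 : ∀ c, hessianMatrix (fun y => Z 0 y c) x = 0) {v : ℕ → Fin p → ℝ} {T : ℕ}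
    (hv : ∀ t < T, v t = v (t + 1) ᵥ* jacobianMatrix (Φ t) (Z t x)) {t : ℕ} (ht : t ≤ T) :
    ∑ c, v t c • hessianMatrix (fun y => Z t y c) x
      = ∑ s ∈ Finset.range t, (jacobianMatrix (Z s) x)ᵀ
          * (∑ a, v (s + 1) a • hessianMatrix (fun z => Φ s z a) (Z s x))
          * jacobianMatrix (Z s) x := by
  induction t with
  | zero => simp [hZ0]
  | succ t ih =>
    simp only [hZs]
    rw [sum_smul_hessianMatrix_comp (hΦ t) (hZ t), ← hv t ht, ih (by omega),
      Finset.sum_range_succ, add_comm]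

end Iterate

section Embedding

variable {R : Type*} [NonAssocSemiring R]

lemma submatrix_one_mulVec_castAdd {n ℓ : ℕ} (y : Fin n → R) (t : Fin (n + ℓ)) :
    ((1 : Matrix (Fin (n + ℓ)) (Fin (n + ℓ)) R).submatrix id (Fin.castAdd ℓ) *ᵥ y) t
      = if h : (t : ℕ) < n then y ⟨t, h⟩ else 0 := by
  induction t using Fin.addCases with
  | left j => simp [mulVec, dotProduct, one_apply]
  | right k =>
    simp only [mulVec, dotProduct, submatrix_apply, id, one_apply, Fin.val_natAdd]
    rw [dif_neg (by omega)]
    refine Finset.sum_eq_zero fun j _ => ?_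
    rw [if_neg (Fin.ne_of_val_ne (by simp only [Fin.val_natAdd, Fin.val_castAdd]; omega)),
      zero_mul]

lemma transpose_submatrix_one_mul_mul {ι κ : Type*} [Fintype ι] [DecidableEq ι] (e : κ → ι)
    (M : Matrix ι ι R) :
    ((1 : Matrix ι ι R).submatrix id e)ᵀ * M * (1 : Matrix ι ι R).submatrix id e
      = M.submatrix e e := by
  ext j k
  simp [mul_apply, one_apply]

end Embedding

section Sweep

variable {ι R : Type*} [Fintype ι] [DecidableEq ι] [CommRing R]
  {J : ℕ → Matrix ι ι R} {Rel : ℕ → ℕ → Matrix ι ι R}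

lemma rel_succ_eq_mul_jac (hRel0 : ∀ b, Rel b 0 = 1)
    (hRelS : ∀ b s, Rel b (s + 1) = J (b + s) * Rel b s) (m b : ℕ) :
    Rel b (m + 1) = Rel (b + 1) m * J b := by
  induction m generalizing b with
  | zero => rw [hRelS, hRel0, hRel0, add_zero, Matrix.one_mul, Matrix.mul_one]
  | succ m ih => rw [hRelS, ih, hRelS, ← Matrix.mul_assoc, add_assoc, add_comm 1 m]

lemma backward_sweep_eq_sum (hRel0 : ∀ b, Rel b 0 = 1)
    (hRelS : ∀ b s, Rel b (s + 1) = J (b + s) * Rel b s) {H W : ℕ → Matrix ι ι R} {ℓ : ℕ}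
    (hWℓ : W ℓ = 0) (hW : ∀ i < ℓ, W i = (J i)ᵀ * W (i + 1) * J i + H i) {i : ℕ}
    (hi : i ≤ ℓ) :
    W i = ∑ t ∈ Finset.Ico i ℓ, (Rel i (t - i))ᵀ * H t * Rel i (t - i) := by
  induction hi using Nat.decreasingInduction with
  | self => simp [hWℓ]
  | of_succ i hi ih =>
    rw [hW i hi, ih, Finset.sum_eq_sum_Ico_succ_bot hi, Nat.sub_self, hRel0,
      Matrix.transpose_one, Matrix.one_mul, Matrix.mul_one, Matrix.mul_sum, Matrix.sum_mul,
      add_comm]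
    congr 1
    refine Finset.sum_congr rfl fun t ht => ?_
    obtain ⟨m, rfl⟩ := Nat.exists_eq_add_of_lt (Finset.mem_Ico.mp ht).1
    rw [show i + m + 1 - i = m + 1 by omega, show i + m + 1 - (i + 1) = m by omega,
      rel_succ_eq_mul_jac hRel0 hRelS, Matrix.transpose_mul]
    simp only [Matrix.mul_assoc]

lemma sweep_eq_sum (hRel0 : ∀ b, Rel b 0 = 1)
    (hRelS : ∀ b s, Rel b (s + 1) = J (b + s) * Rel b s) {H W : ℕ → Matrix ι ι R} {ℓ : ℕ}
    (hW0 : W 0 = 0)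
    (hWs : ∀ s < ℓ, W (s + 1) = (J (ℓ - s - 1))ᵀ * W s * J (ℓ - s - 1) + H (ℓ - s - 1))
    {s : ℕ} (hs : s ≤ ℓ) :
    W s = ∑ t ∈ Finset.Ico (ℓ - s) ℓ,
      (Rel (ℓ - s) (t - (ℓ - s)))ᵀ * H t * Rel (ℓ - s) (t - (ℓ - s)) := by
  have hback := backward_sweep_eq_sum (W := fun i => W (ℓ - i)) (H := H) hRel0 hRelS
    (by simpa using hW0) (fun i hi => by
      rw [show ℓ - i = ℓ - (i + 1) + 1 by omega, hWs _ (by omega)]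
      congr <;> omega) (Nat.sub_le ℓ s)
  simpa [Nat.sub_sub_self hs] using hback

end Sweep

/-- Indexing: `Φ t`, `Jac t` and `Hterm t` are the paper's `Φ_{t+1}`, its Jacobian and
`(v̄^{t+1})ᵀΦ_{t+1}''` at the state `Z t x`; `Rel b m = Jac (b+m-1) ⋯ Jac b`; `Wseq s` is `W`
after the sweep has processed nodes `ℓ, …, ℓ-s+1`. -/
theorem edge_pushing_block_invariant_general (n ℓ : ℕ)
    (Φ : ℕ → (Fin (n+ℓ) → ℝ) → (Fin (n+ℓ) → ℝ))
    (hΦ : ∀ t, ContDiff ℝ 2 (Φ t))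
    (lastIdx : Fin (n+ℓ))
    (x : Fin n → ℝ)
    (Z : ℕ → (Fin n → ℝ) → (Fin (n+ℓ) → ℝ))
    (hZ0 : ∀ x t, Z 0 x t = if h : (t : ℕ) < n then x ⟨t, h⟩ else 0)
    (hZs : ∀ i x, Z (i+1) x = Φ i (Z i x))
    (f : (Fin n → ℝ) → ℝ) (hf : ∀ x, f x = Z ℓ x lastIdx)
    (vbar : ℕ → Fin (n+ℓ) → ℝ)
    (hvℓ : vbar ℓ = Pi.single lastIdx 1)
    (hvs : ∀ t, t < ℓ → ∀ j,
      vbar t j = ∑ a, vbar (t+1) a * pd (fun w => Φ t w a) (Z t x) j)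
    (Jac : ℕ → Matrix (Fin (n+ℓ)) (Fin (n+ℓ)) ℝ)
    (hJac : ∀ t a b, Jac t a b = pd (fun w => Φ t w a) (Z t x) b)
    (Hterm : ℕ → Matrix (Fin (n+ℓ)) (Fin (n+ℓ)) ℝ)
    (hHterm : ∀ t j k, Hterm t j k
      = ∑ a, vbar (t+1) a * H2 (fun w => Φ t w a) (Z t x) j k)
    (Wseq : ℕ → Matrix (Fin (n+ℓ)) (Fin (n+ℓ)) ℝ)
    (hW0 : Wseq 0 = 0)
    (hWs : ∀ s, s < ℓ → Wseq (s+1)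
      = (Jac (ℓ - s - 1))ᵀ * Wseq s * Jac (ℓ - s - 1) + Hterm (ℓ - s - 1))
    (Rel : ℕ → ℕ → Matrix (Fin (n+ℓ)) (Fin (n+ℓ)) ℝ)
    (hRel0 : ∀ b, Rel b 0 = 1)
    (hRelS : ∀ b s, Rel b (s+1) = Jac (b + s) * Rel b s) :
    (∀ s, s ≤ ℓ → Wseq s = ∑ t ∈ Finset.Ico (ℓ - s) ℓ,
        (Rel (ℓ - s) (t - (ℓ - s)))ᵀ * Hterm t * Rel (ℓ - s) (t - (ℓ - s)))
    ∧ ∀ j k : Fin n, H2 f x j k = Wseq ℓ (Fin.castAdd ℓ j) (Fin.castAdd ℓ k) := by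
  set P := (1 : Matrix (Fin (n+ℓ)) (Fin (n+ℓ)) ℝ).submatrix id (Fin.castAdd ℓ)
  have hZ0P : Z 0 = fun y => P *ᵥ y :=
    funext fun y => funext fun t => by rw [hZ0, submatrix_one_mulVec_castAdd]
  have hZ := contDiff_of_comp_succ hΦ (hZ0P ▸ (Matrix.toLin' P).toContinuousLinearMap.contDiff) hZs
  have hJ : ∀ t, Jac t = jacobianMatrix (Φ t) (Z t x) := fun t => Matrix.ext (hJac t)
  have hH : ∀ t, Hterm t = ∑ a, vbar (t+1) a • hessianMatrix (fun w => Φ t w a) (Z t x) :=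
    fun t => by ext j k; simp [hHterm, Matrix.sum_apply, hessianMatrix]
  refine ⟨fun s hs => sweep_eq_sum hRel0 hRelS hW0 hWs hs, fun j k => ?_⟩
  have hD : ∀ t, jacobianMatrix (Z t) x = Rel 0 t * P := fun t => by
    rw [jacobianMatrix_iterate (fun t => (hΦ t).differentiable two_ne_zero)
      (fun t => (hZ t).differentiable two_ne_zero) hZs x (hRel0 0)
      (fun t => by rw [hRelS, zero_add, hJ]) t, hZ0P, jacobianMatrix_mulVec]
  have hess : hessianMatrix f x = Pᵀ * Wseq ℓ * P := calc
    hessianMatrix f x = ∑ c, vbar ℓ c • hessianMatrix (fun y => Z ℓ y c) x := by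
      simp [hvℓ, funext hf, Pi.single_apply]
    _ = ∑ t ∈ Finset.range ℓ, (Rel 0 t * P)ᵀ * Hterm t * (Rel 0 t * P) := by
      rw [sum_smul_hessianMatrix_iterate hΦ hZ hZs
        (fun c => by rw [hZ0P]; exact hessianMatrix_mulVec_apply P c x)
        (fun t ht => funext (hvs t ht)) le_rfl]
      simp only [hD, hH]
    _ = Pᵀ * Wseq ℓ * P := by
      rw [sweep_eq_sum hRel0 hRelS hW0 hWs le_rfl, Nat.sub_self, ← Finset.range_eq_Ico,
        Matrix.mul_sum, Matrix.sum_mul]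
      simp only [Nat.sub_zero, Matrix.transpose_mul, Matrix.mul_assoc]
  rw [transpose_submatrix_one_mul_mul] at hess
  exact congrFun (congrFun hess j) k

/-- invariant of the block edge_pushing algorithm.  Sweeping nodes
ℓ, ℓ-1, …, 1 with W ← Φᵢ'ᵀWΦᵢ' + (v̄ⁱ)ᵀΦᵢ'' (W initialized to 0), after s steps
(i.e., at the end of the iteration sweeping node i = ℓ-s+1)
W = Σ_{k=i}^{ℓ} (Φᵢ'ᵀ⋯Φ_{k-1}'ᵀ)((v̄ᵏ)ᵀΦ_k'')(Φ_{k-1}'⋯Φᵢ'), with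
(v̄ᵏ)ᵀ = e_ℓᵀΦ_ℓ'⋯Φ_{k+1}'; at termination f'' = P(Wseq ℓ)Pᵀ.  Here `Φ t`,
`Jac t`, `Hterm t` are the paper's Φ_{t+1}, its Jacobian and the central
multiplicand (v̄^{t+1})ᵀΦ_{t+1}'' at the intermediate point Z t x, and
`Rel b m` = Jac (b+m-1) ⋯ Jac b is the relative product of Jacobians. -/
theorem edge_pushing_block_invariant (n ℓ : ℕ) (hℓ : 0 < ℓ)
    (Φ : ℕ → (Fin (n+ℓ) → ℝ) → (Fin (n+ℓ) → ℝ))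
    (hΦ : ∀ t, ContDiff ℝ 2 (Φ t))
    (lastIdx : Fin (n+ℓ)) (hlast : (lastIdx : ℕ) = n + ℓ - 1)
    (x : Fin n → ℝ)
    (Z : ℕ → (Fin n → ℝ) → (Fin (n+ℓ) → ℝ))
    (hZ0 : ∀ x t, Z 0 x t = if h : (t : ℕ) < n then x ⟨t, h⟩ else 0)
    (hZs : ∀ i x, Z (i+1) x = Φ i (Z i x))
    (f : (Fin n → ℝ) → ℝ) (hf : ∀ x, f x = Z ℓ x lastIdx)
    (vbar : ℕ → Fin (n+ℓ) → ℝ)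
    (hvℓ : vbar ℓ = Pi.single lastIdx 1)
    (hvs : ∀ t, t < ℓ → ∀ j,
      vbar t j = ∑ a, vbar (t+1) a * pd (fun w => Φ t w a) (Z t x) j)
    (Jac : ℕ → Matrix (Fin (n+ℓ)) (Fin (n+ℓ)) ℝ)
    (hJac : ∀ t a b, Jac t a b = pd (fun w => Φ t w a) (Z t x) b)
    (Hterm : ℕ → Matrix (Fin (n+ℓ)) (Fin (n+ℓ)) ℝ)
    (hHterm : ∀ t j k, Hterm t j k
      = ∑ a, vbar (t+1) a * H2 (fun w => Φ t w a) (Z t x) j k)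
    (Wseq : ℕ → Matrix (Fin (n+ℓ)) (Fin (n+ℓ)) ℝ)
    (hW0 : Wseq 0 = 0)
    (hWs : ∀ s, s < ℓ → Wseq (s+1)
      = (Jac (ℓ - s - 1))ᵀ * Wseq s * Jac (ℓ - s - 1) + Hterm (ℓ - s - 1))
    (Rel : ℕ → ℕ → Matrix (Fin (n+ℓ)) (Fin (n+ℓ)) ℝ)
    (hRel0 : ∀ b, Rel b 0 = 1)
    (hRelS : ∀ b s, Rel b (s+1) = Jac (b + s) * Rel b s) :
    (∀ s, s ≤ ℓ → Wseq s = ∑ t ∈ Finset.Ico (ℓ - s) ℓ,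
        (Rel (ℓ - s) (t - (ℓ - s)))ᵀ * Hterm t * Rel (ℓ - s) (t - (ℓ - s)))
    ∧ ∀ j k : Fin n, H2 f x j k = Wseq ℓ (Fin.castAdd ℓ j) (Fin.castAdd ℓ k) :=
  edge_pushing_block_invariant_general n ℓ Φ hΦ lastIdx x Z hZ0 hZs f hf vbar hvℓ hvs Jac hJac Hterm
    hHterm Wseq hW0 hWs Rel hRel0 hRelS
end

section
/- In the reverse gradient sweep, sweeping node i preserves the path-sum invariant: if before the update each v̄_j (for j < i not yet swept) equals the sum of weights of all directed paths from j to ℓ that pass only through already-swept nodes after j, then after distributing v̄_i to predecessors (v̄_j ← v̄_j + c^i_j v̄_i for j ≺ i), each predecessor's adjoint additionally accounts for all paths from j to ℓ through node i, each weighted by c^i_j times the weight of the corresponding path from i to ℓ. -/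
/-!
Every arc goes from a smaller to a larger node, so a path is strictly increasing. Hence a path
from `j < i` whose later nodes are all `≥ i` either avoids `i`, and is then counted by the old
`v̄_j`, or has `i` as its second node: it is `j :: p` for a path `p` counted by `v̄_i`, of weight
`c^i_j · weight p`.
-/

/-- Weight of a path (a list of nodes): product of the weights c of its
consecutive arcs, where `c i j` is the weight of arc (j,i). -/
noncomputable def pathWeight {V : Type*} (c : V → V → ℝ) (l : List V) : ℝ :=
  ((l.zip l.tail).map (fun q => c q.2 q.1)).prod

lemma pathWeight_cons_cons {V : Type*} (c : V → V → ℝ) (a b : V) (t : List V) :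
    pathWeight c (a :: b :: t) = c b a * pathWeight c (b :: t) := rfl

section

variable {V : Type*} (A : V → V → Prop) (top : V)

/-- `P` constrains the nodes after `j`, i.e. it describes the swept nodes. -/
def pathsTo (P : V → Prop) (j : V) : Set (List V) :=
  {l | l.IsChain A ∧ l.head? = some j ∧ l.getLast? = some top ∧ ∀ t ∈ l.tail, P t}

variable {A top}

lemma pathsTo_mono {P Q : V → Prop} (hPQ : ∀ x, P x → Q x) (j : V) :
    pathsTo A top P j ⊆ pathsTo A top Q j :=
  fun _ ⟨hc, hh, hl, ht⟩ => ⟨hc, hh, hl, fun x hx => hPQ x (ht x hx)⟩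

lemma exists_eq_cons_of_mem_pathsTo {P : V → Prop} {j : V} {l : List V}
    (hl : l ∈ pathsTo A top P j) : ∃ t, l = j :: t := by
  obtain ⟨_, hhead, -⟩ := hl
  cases l with
  | nil => simp at hhead
  | cons a t => exact ⟨t, by simpa using hhead⟩

lemma cons_cons_mem_pathsTo_iff {P : V → Prop} {i j : V} {t : List V} :
    j :: i :: t ∈ pathsTo A top P j ↔ A j i ∧ P i ∧ i :: t ∈ pathsTo A top P i := by
  simp [pathsTo, List.isChain_cons_cons, List.getLast?_cons_cons]
  tauto

lemma finsum_mem_pathWeight_cons (c : V → V → ℝ) (P : V → Prop) (i j : V) [Decidable (A j i)] :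
    ∑ᶠ l ∈ {l ∈ pathsTo A top P i | A j i}, pathWeight c (j :: l) =
      if A j i then c i j * ∑ᶠ l ∈ pathsTo A top P i, pathWeight c l else 0 := by
  split_ifs with hji
  · simp only [hji, and_true, Set.ofPred_mem_eq, mul_finsum_mem]
    refine finsum_mem_congr rfl fun l hl => ?_
    obtain ⟨t, rfl⟩ := exists_eq_cons_of_mem_pathsTo hl
    exact pathWeight_cons_cons c j i t
  · simp [hji]

variable [Preorder V]

lemma List.IsChain.pairwise_lt (hA : ∀ j k, A j k → j < k) {l : List V} (hl : l.IsChain A) :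
    l.Pairwise (· < ·) :=
  List.isChain_iff_pairwise.mp (hl.imp hA)

lemma pathsTo_finite [Fintype V] (hA : ∀ j k, A j k → j < k) (P : V → Prop) (j : V) :
    (pathsTo A top P j).Finite :=
  (List.finite_length_le V (Fintype.card V)).subset fun _ hl =>
    (hl.1.pairwise_lt hA).nodup.length_le_card

lemma List.head_eq_of_pairwise_lt_of_forall_le {i b : V} {t : List V}
    (ht : (b :: t).Pairwise (· < ·)) (hi : i ∈ b :: t) (hle : ∀ x ∈ b :: t, i ≤ x) : b = i := by
  rcases List.mem_cons.mp hi with rfl | hit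
  · rfl
  · exact absurd (hle b List.mem_cons_self) (List.rel_of_pairwise_cons ht hit).not_ge

lemma disjoint_pathsTo_lt_image_cons (P : V → Prop) (i j : V) :
    Disjoint (pathsTo A top (i < ·) j) (List.cons j '' pathsTo A top P i) := by
  rw [Set.disjoint_right]
  rintro _ ⟨l, hl, rfl⟩ ⟨-, -, -, hlt⟩
  obtain ⟨t, rfl⟩ := exists_eq_cons_of_mem_pathsTo hl
  exact lt_irrefl i (hlt i List.mem_cons_self)

end

section

variable {V : Type*} [PartialOrder V] {A : V → V → Prop} {top : V}

lemma pathsTo_le_eq_union (hA : ∀ j k, A j k → j < k) (i j : V) :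
    pathsTo A top (i ≤ ·) j =
      pathsTo A top (i < ·) j ∪ List.cons j '' {l ∈ pathsTo A top (i < ·) i | A j i} := by
  ext l
  constructor
  · intro hl
    obtain ⟨t, rfl⟩ := exists_eq_cons_of_mem_pathsTo hl
    by_cases hit : i ∈ t
    · obtain ⟨b, t, rfl⟩ := List.exists_cons_of_ne_nil (List.ne_nil_of_mem hit)
      have hsorted := (hl.1.pairwise_lt hA).of_cons
      obtain rfl := List.head_eq_of_pairwise_lt_of_forall_le hsorted hit hl.2.2.2
      obtain ⟨hji, -, hc, hh, hlast, -⟩ := cons_cons_mem_pathsTo_iff.mp hl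
      exact Or.inr ⟨b :: t, ⟨⟨hc, hh, hlast, fun x => List.rel_of_pairwise_cons hsorted⟩, hji⟩, rfl⟩
    · refine Or.inl ⟨hl.1, hl.2.1, hl.2.2.1, fun x hx => (hl.2.2.2 x hx).lt_of_ne ?_⟩
      rintro rfl
      exact hit hx
  · rintro (hl | ⟨l, ⟨hl, hji⟩, rfl⟩)
    · exact pathsTo_mono (fun _ => le_of_lt) j hl
    · obtain ⟨t, rfl⟩ := exists_eq_cons_of_mem_pathsTo hl
      exact cons_cons_mem_pathsTo_iff.mpr ⟨hji, le_rfl, pathsTo_mono (fun _ => le_of_lt) i hl⟩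

end

/-- one step of the reverse gradient sweep preserves the path-sum
invariant.  If, right before node i is swept, every adjoint v̄_j (j ≤ i) equals
the sum of weights of directed paths from j to the top node ℓ all of whose
subsequent nodes are already swept (> i), then after distributing v̄_i to the
predecessors (v̄_j ← v̄_j + c^i_j v̄_i for j ≺ i), every v̄_j with j < i equals the
sum of weights of paths from j to ℓ whose subsequent nodes lie in the enlarged
swept set (≥ i): each path through i is accounted with weight c^i_j times the
weight of the corresponding path from i to ℓ. -/
theorem reverse_sweep_invariant_step (N : ℕ)
    (A : Fin (N+1) → Fin (N+1) → Prop) [DecidableRel A]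
    (hA : ∀ j k, A j k → j < k)
    (c : Fin (N+1) → Fin (N+1) → ℝ)
    (i : Fin (N+1))
    (vb vb' : Fin (N+1) → ℝ)
    (hvb' : ∀ j, vb' j = vb j + (if A j i then c i j * vb i else 0))
    (hinv : ∀ j, j ≤ i → vb j = ∑ᶠ (l : List (Fin (N+1)))
        (_ : l.Chain' A ∧ l.head? = some j ∧ l.getLast? = some (Fin.last N)
          ∧ ∀ t ∈ l.tail, i < t), pathWeight c l) :
    ∀ j, j < i → vb' j = ∑ᶠ (l : List (Fin (N+1)))
        (_ : l.Chain' A ∧ l.head? = some j ∧ l.getLast? = some (Fin.last N)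
          ∧ ∀ t ∈ l.tail, i ≤ t), pathWeight c l := by
  intro j hj
  have hinv' : ∀ k ≤ i, vb k = ∑ᶠ l ∈ pathsTo A (Fin.last N) (i < ·) k, pathWeight c l := hinv
  have hthrough_sub : {l ∈ pathsTo A (Fin.last N) (i < ·) i | A j i} ⊆
      pathsTo A (Fin.last N) (i < ·) i := Set.sep_subset _ _
  change _ = ∑ᶠ l ∈ pathsTo A (Fin.last N) (i ≤ ·) j, pathWeight c l
  rw [pathsTo_le_eq_union hA,
    finsum_mem_union ((disjoint_pathsTo_lt_image_cons _ i j).mono_right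
      (Set.image_mono hthrough_sub)) (pathsTo_finite hA _ j)
      (((pathsTo_finite hA _ i).subset hthrough_sub).image _),
    finsum_mem_image List.cons_injective.injOn, finsum_mem_pathWeight_cons, hvb', hinv' j hj.le,
    hinv' i le_rfl]
end
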